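/- Let F be a set of functions from a set S to ℝ, φ : ℝ → ℝ an L-Lipschitz function, and fix points s₁,…,sₙ ∈ S. Then the empirical Rademacher complexity of φ ∘ F = {φ∘f : f ∈ F} satisfies R̂ₙ(φ∘F) ≤ L · R̂ₙ(F), where R̂ₙ(F) = E_ε[sup_{f∈F} (1/n)Σᵢ εᵢ f(sᵢ)] with i.i.d. Rademacher εᵢ, assuming φ(0) = 0. -/

import Mathlib

/-!
The Rademacher average of a bounded family of vectors can only grow when the family is replaced,
one coordinate at a time, by one whose coordinate increments dominate in absolute value. For a
single coordinate `j`, pair each sign pattern with its flip at `j`: the sum of the two suprema is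
`sup (a + p) + sup (a - p) = sup_{f,g} (a f + a g + p f - p g)`, and `p f - p g ≤ |q f - q g|`
is matched by `a f + q f + a g - q g` or by the same with `f, g` swapped, so it is at most
`sup (a + q) + sup (a - q)`. Taking `p = φ ∘ f` and `q = L • f` gives
`R̂(φ ∘ F) ≤ R̂(L • F) = L • R̂(F)`.
-/

open Finset

def rademacherSign (b : Bool) : ℝ := if b then 1 else -1

lemma abs_rademacherSign (b : Bool) : |rademacherSign b| = 1 := by
  cases b <;> norm_num [rademacherSign]

lemma rademacherSign_not (b : Bool) : rademacherSign (!b) = -rademacherSign b := by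
  cases b <;> norm_num [rademacherSign]

section SignedSum

variable {ι κ : Type*} [Fintype κ]

def signedSum (σ : κ → Bool) (v : κ → ℝ) : ℝ := ∑ i, rademacherSign (σ i) * v i

lemma signedSum_le {C : ℝ} (σ : κ → Bool) {v : κ → ℝ} (hv : ∀ i, |v i| ≤ C) :
    signedSum σ v ≤ Fintype.card κ * C := by
  calc signedSum σ v ≤ ∑ _i : κ, C := sum_le_sum fun i _ =>
        (le_abs_self _).trans (by rw [abs_mul, abs_rademacherSign, one_mul]; exact hv i)
    _ = Fintype.card κ * C := by simp

lemma bddAbove_range_signedSum {C : ℝ} (σ : κ → Bool) {x : ι → κ → ℝ}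
    (hx : ∀ f i, |x f i| ≤ C) : BddAbove (Set.range fun f => signedSum σ (x f)) :=
  ⟨Fintype.card κ * C, by rintro _ ⟨f, rfl⟩; exact signedSum_le σ (hx f)⟩

lemma signedSum_const_mul (σ : κ → Bool) (c : ℝ) (v : κ → ℝ) :
    signedSum σ (fun i => c * v i) = c * signedSum σ v := by
  simp only [signedSum, mul_sum]
  exact sum_congr rfl fun i _ => by ring

end SignedSum

lemma iSup_add_iSup_sub_le_of_abs_sub_le {ι : Type*} {a p q : ι → ℝ}
    (hpq : ∀ f g, |p f - p g| ≤ |q f - q g|)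
    (hadd : BddAbove (Set.range fun f => a f + q f))
    (hsub : BddAbove (Set.range fun f => a f - q f)) :
    (⨆ f, a f + p f) + (⨆ f, a f - p f) ≤ (⨆ f, a f + q f) + (⨆ f, a f - q f) := by
  rcases isEmpty_or_nonempty ι with _ | _
  · simp
  have pair : ∀ f g, (a f + p f) + (a g - p g) ≤ (⨆ f, a f + q f) + (⨆ f, a f - q f) := by
    intro f g
    have hp := (le_abs_self (p f - p g)).trans (hpq f g)
    rcases le_total (q g) (q f) with h | h
    · have := le_ciSup hadd f
      have := le_ciSup hsub g
      rw [abs_of_nonneg (sub_nonneg.mpr h)] at hp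
      linarith
    · have := le_ciSup hadd g
      have := le_ciSup hsub f
      rw [abs_of_nonpos (sub_nonpos.mpr h)] at hp
      linarith
  exact le_sub_iff_add_le.mp <| ciSup_le fun f =>
    le_sub_comm.mp <| ciSup_le fun g => le_sub_iff_add_le'.mpr (pair f g)

lemma sum_le_sum_of_add_perm_le {α : Type*} [Fintype α] (e : Equiv.Perm α) {g h : α → ℝ}
    (hgh : ∀ a, g a + g (e a) ≤ h a + h (e a)) : ∑ a, g a ≤ ∑ a, h a := by
  have := sum_le_sum fun a (_ : a ∈ univ) => hgh a
  rw [sum_add_distrib, sum_add_distrib, Equiv.sum_comp e g, Equiv.sum_comp e h] at this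
  linarith

section Comparison

variable {ι κ : Type*} [DecidableEq κ]

def flipAt (j : κ) (σ : κ → Bool) : κ → Bool := Function.update σ j (!σ j)

lemma flipAt_involutive (j : κ) : Function.Involutive (flipAt j) := by
  intro σ
  funext i
  by_cases h : i = j
  · subst h; simp [flipAt]
  · simp [flipAt, Function.update_of_ne h]

variable [Fintype κ]

lemma signedSum_eq_add_sum_erase (σ : κ → Bool) (v : κ → ℝ) (j : κ) :
    signedSum σ v = ∑ i ∈ univ.erase j, rademacherSign (σ i) * v i + rademacherSign (σ j) * v j :=
  (sum_erase_add _ _ (mem_univ j)).symm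

lemma signedSum_flipAt (σ : κ → Bool) (v : κ → ℝ) (j : κ) :
    signedSum (flipAt j σ) v
      = ∑ i ∈ univ.erase j, rademacherSign (σ i) * v i - rademacherSign (σ j) * v j := by
  rw [signedSum_eq_add_sum_erase _ _ j, flipAt, Function.update_self, rademacherSign_not,
    neg_mul, ← sub_eq_add_neg]
  congr 1
  exact sum_congr rfl fun i hi => by rw [Function.update_of_ne (ne_of_mem_erase hi)]

lemma sum_iSup_signedSum_le_of_eqOn_compl {x y : ι → κ → ℝ} {C : ℝ} (j : κ)
    (hoff : ∀ f i, i ≠ j → x f i = y f i) (hj : ∀ f g, |x f j - x g j| ≤ |y f j - y g j|)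
    (hy : ∀ f i, |y f i| ≤ C) :
    ∑ σ : κ → Bool, ⨆ f, signedSum σ (x f) ≤ ∑ σ : κ → Bool, ⨆ f, signedSum σ (y f) := by
  refine sum_le_sum_of_add_perm_le ((flipAt_involutive j).toPerm _) fun σ => ?_
  set a : ι → ℝ := fun f => ∑ i ∈ univ.erase j, rademacherSign (σ i) * y f i
  have ha : ∀ f, ∑ i ∈ univ.erase j, rademacherSign (σ i) * x f i = a f := fun f =>
    sum_congr rfl fun i hi => by rw [hoff f i (ne_of_mem_erase hi)]
  have key := iSup_add_iSup_sub_le_of_abs_sub_le (a := a)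
    (p := fun f => rademacherSign (σ j) * x f j) (q := fun f => rademacherSign (σ j) * y f j)
    (fun f g => by
      simp only [← mul_sub, abs_mul, abs_rademacherSign, one_mul]
      exact hj f g)
    (by simpa only [a, ← signedSum_eq_add_sum_erase] using bddAbove_range_signedSum σ hy)
    (by simpa only [a, ← signedSum_flipAt] using bddAbove_range_signedSum (flipAt j σ) hy)
  simp only [Function.Involutive.coe_toPerm]
  simp_rw [signedSum_flipAt, signedSum_eq_add_sum_erase _ _ j, ha]
  exact key

theorem sum_iSup_signedSum_le_of_abs_sub_le {x y : ι → κ → ℝ} {C : ℝ}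
    (hxy : ∀ f g i, |x f i - x g i| ≤ |y f i - y g i|)
    (hx : ∀ f i, |x f i| ≤ C) (hy : ∀ f i, |y f i| ≤ C) :
    ∑ σ : κ → Bool, ⨆ f, signedSum σ (x f) ≤ ∑ σ : κ → Bool, ⨆ f, signedSum σ (y f) := by
  let hybrid (T : Finset κ) (f : ι) (i : κ) : ℝ := if i ∈ T then y f i else x f i
  have hybrid_le : ∀ T, ∑ σ : κ → Bool, ⨆ f, signedSum σ (x f)
      ≤ ∑ σ : κ → Bool, ⨆ f, signedSum σ (hybrid T f) := by
    intro T
    induction T using Finset.induction_on with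
    | empty => simp [hybrid]
    | insert j T hj ih =>
      refine ih.trans (sum_iSup_signedSum_le_of_eqOn_compl (C := C) j ?_ ?_ ?_)
      · intro f i hi
        simp [hybrid, hi]
      · intro f g
        simpa [hybrid, hj] using hxy f g j
      · intro f i
        dsimp only [hybrid]
        split_ifs
        exacts [hy f i, hx f i]
  simpa [hybrid] using hybrid_le univ

end Comparison

section EmpiricalRademacher

variable {ι : Type*} {n : ℕ}

noncomputable def empiricalRademacher (x : ι → Fin n → ℝ) : ℝ :=
  (1 / 2 ^ n : ℝ) * ∑ σ : Fin n → Bool, ⨆ f, (1 / (n : ℝ)) * signedSum σ (x f)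

lemma empiricalRademacher_eq (x : ι → Fin n → ℝ) :
    empiricalRademacher x
      = 1 / 2 ^ n * (1 / (n : ℝ) * ∑ σ : Fin n → Bool, ⨆ f, signedSum σ (x f)) := by
  simp only [empiricalRademacher, ← Real.mul_iSup_of_nonneg (by positivity : (0 : ℝ) ≤ 1 / n),
    ← mul_sum]

lemma empiricalRademacher_le_of_abs_sub_le {x y : ι → Fin n → ℝ} {C : ℝ}
    (hxy : ∀ f g i, |x f i - x g i| ≤ |y f i - y g i|)
    (hx : ∀ f i, |x f i| ≤ C) (hy : ∀ f i, |y f i| ≤ C) :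
    empiricalRademacher x ≤ empiricalRademacher y := by
  rw [empiricalRademacher_eq, empiricalRademacher_eq]
  gcongr 1 / 2 ^ n * (1 / (n : ℝ) * ?_)
  exact sum_iSup_signedSum_le_of_abs_sub_le hxy hx hy

lemma empiricalRademacher_const_mul {c : ℝ} (hc : 0 ≤ c) (x : ι → Fin n → ℝ) :
    empiricalRademacher (fun f i => c * x f i) = c * empiricalRademacher x := by
  simp only [empiricalRademacher_eq, signedSum_const_mul, ← Real.mul_iSup_of_nonneg hc, ← mul_sum]
  ring

end EmpiricalRademacher

theorem rademacher_contraction_general {S : Type*} (F : Set (S → ℝ))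
    (n : ℕ) (s : Fin n → S)
    (φ : ℝ → ℝ) (L : NNReal) (hφ : LipschitzWith L φ)
    (B : ℝ) (hB : ∀ f ∈ F, ∀ x : S, |f x| ≤ B) :
    (1 / 2 ^ n : ℝ) * ∑ σ : Fin n → Bool,
        (⨆ f : F, (1 / (n : ℝ)) *
          ∑ i : Fin n, (if σ i then (1 : ℝ) else -1) * φ (f.1 (s i)))
      ≤ (L : ℝ) * ((1 / 2 ^ n : ℝ) * ∑ σ : Fin n → Bool,
          ⨆ f : F, (1 / (n : ℝ)) *
            ∑ i : Fin n, (if σ i then (1 : ℝ) else -1) * f.1 (s i)) := by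
  have hφ_lip : ∀ a b, |φ a - φ b| ≤ |L * a - L * b| := fun a b => by
    rw [← mul_sub, abs_mul, NNReal.abs_eq]
    simpa only [Real.dist_eq] using hφ.dist_le_mul a b
  have hφ_bdd : ∀ a, |a| ≤ B → |φ a| ≤ |φ 0| + L * B := fun a ha => by
    have := (hφ_lip a 0).trans_eq (by rw [mul_zero, sub_zero, abs_mul, NNReal.abs_eq])
    nlinarith [abs_sub_abs_le_abs_sub (φ a) (φ 0), L.coe_nonneg, abs_nonneg (φ 0)]
  have hL_bdd : ∀ a, |a| ≤ B → |L * a| ≤ |φ 0| + L * B := fun a ha => by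
    rw [abs_mul, NNReal.abs_eq]
    nlinarith [L.coe_nonneg, abs_nonneg (φ 0)]
  calc empiricalRademacher (fun (f : F) i => φ (f.1 (s i)))
      ≤ empiricalRademacher (fun (f : F) i => (L : ℝ) * f.1 (s i)) :=
        empiricalRademacher_le_of_abs_sub_le (fun f g i => hφ_lip _ _)
          (fun f i => hφ_bdd _ (hB f f.2 _)) (fun f i => hL_bdd _ (hB f f.2 _))
    _ = L * empiricalRademacher (fun (f : F) i => f.1 (s i)) :=
        empiricalRademacher_const_mul L.coe_nonneg _

/-- Talagrand's contraction lemma: composing a uniformly bounded function class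
with an `L`-Lipschitz function `φ` with `φ 0 = 0` multiplies the empirical
Rademacher complexity by at most `L`. -/
theorem rademacher_contraction {S : Type*} (F : Set (S → ℝ)) (hF : F.Nonempty)
    (n : ℕ) (hn : 0 < n) (s : Fin n → S)
    (φ : ℝ → ℝ) (L : NNReal) (hφ : LipschitzWith L φ) (hφ0 : φ 0 = 0)
    (B : ℝ) (hB : ∀ f ∈ F, ∀ x : S, |f x| ≤ B) :
    (1 / 2 ^ n : ℝ) * ∑ σ : Fin n → Bool,
        (⨆ f : F, (1 / (n : ℝ)) *
          ∑ i : Fin n, (if σ i then (1 : ℝ) else -1) * φ (f.1 (s i)))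
      ≤ (L : ℝ) * ((1 / 2 ^ n : ℝ) * ∑ σ : Fin n → Bool,
          ⨆ f : F, (1 / (n : ℝ)) *
            ∑ i : Fin n, (if σ i then (1 : ℝ) else -1) * f.1 (s i)) :=
  rademacher_contraction_general F n s φ L hφ B hB
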